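/- Let $\sigma \in \{1,-1\}$ and $\Lambda = \begin{pmatrix} 0 & \sigma \\ 1 & 0 \end{pmatrix}$. Suppose $r_1, r_2 : \mathbb{R} \to \mathbb{C}$ and nonvanishing $a_1, a_2 : \mathbb{R} \to \mathbb{C}$ satisfy $\overline{r_2(-k)} = r_1(k) a_1(k)/a_2(k)$, $\overline{r_1(-k)} = r_2(k) a_2(k)/a_1(k)$, and $1 + \sigma r_1(k) r_2(k) = 1/(a_1(k) a_2(k))$ for all $k \in \mathbb{R}$. For real $x, t, k$ let $J(x,t,k) = \begin{pmatrix} 1 + \sigma r_1(k) r_2(k) & \sigma r_2(k) e^{-2ikx - 4ik^2 t} \\ r_1(k) e^{2ikx + 4ik^2 t} & 1 \end{pmatrix}$. Then $\Lambda \, \overline{J(-x,t,-k)} \, \Lambda^{-1} = \begin{pmatrix} a_2(k) & 0 \\ 0 & 1/a_2(k) \end{pmatrix} J(x,t,k) \begin{pmatrix} a_1(k) & 0 \\ 0 & 1/a_1(k) \end{pmatrix}$. -/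

import Mathlib

open Matrix Complex

/-!
Conjugation by `Λ = !![0, σ; 1, 0]` swaps the diagonal entries of a `2 × 2` matrix and exchanges
the off-diagonal ones up to the factor `σ` (as `σ² = 1`). Complex conjugation reverses the
oscillatory factors because the phase `2kx + 4k²t` is real and even in `(x, k)`; the symmetries of
`r₁, r₂` then match the off-diagonal entries, and the diagonal ones match because
`1 + σ r₁ r₂ = 1 / (a₁ a₂)`.
-/

theorem Matrix.antidiag_mul_mul_inv {R : Type*} [CommRing R] {σ : R} (hσ : σ * σ = 1)
    (M : Matrix (Fin 2) (Fin 2) R) :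
    !![0, σ; 1, 0] * M * (!![0, σ; 1, 0])⁻¹ = !![M 1 1, σ * M 1 0; σ * M 0 1, M 0 0] := by
  have hinv : (!![0, σ; 1, 0])⁻¹ = !![0, 1; σ, 0] :=
    inv_eq_right_inv (by simp [hσ, one_fin_two])
  have hσM : σ * M 1 1 * σ = M 1 1 := by linear_combination M 1 1 * hσ
  rw [hinv, eta_fin_two M]
  simp [hσM, mul_comm]

theorem Matrix.diag_mul_mul_diag {R : Type*} [CommRing R] (a d b e : R)
    (M : Matrix (Fin 2) (Fin 2) R) :
    !![a, 0; 0, d] * M * !![b, 0; 0, e] =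
      !![a * M 0 0 * b, a * M 0 1 * e; d * M 1 0 * b, d * M 1 1 * e] := by
  rw [eta_fin_two M]
  simp

theorem conj_exp_phase_at_neg (x t k : ℝ) :
    starRingEnd ℂ (exp (2 * I * (-k : ℝ) * (-x : ℝ) + 4 * I * (-k : ℝ) ^ 2 * t)) =
      exp (-2 * I * k * x - 4 * I * k ^ 2 * t) := by
  rw [← exp_conj]
  congr 1
  simp [map_ofNat]
  ring

theorem conj_exp_neg_phase_at_neg (x t k : ℝ) :
    starRingEnd ℂ (exp (-2 * I * (-k : ℝ) * (-x : ℝ) - 4 * I * (-k : ℝ) ^ 2 * t)) =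
      exp (2 * I * k * x + 4 * I * k ^ 2 * t) := by
  rw [← exp_conj]
  congr 1
  simp [map_ofNat]

theorem jump_matrix_symmetry
    (σ : ℂ) (hσ : σ = 1 ∨ σ = -1)
    (r₁ r₂ a₁ a₂ : ℝ → ℂ)
    (ha₁ : ∀ k : ℝ, a₁ k ≠ 0) (ha₂ : ∀ k : ℝ, a₂ k ≠ 0)
    (h₁ : ∀ k : ℝ, (starRingEnd ℂ) (r₂ (-k)) = r₁ k * (a₁ k / a₂ k))
    (h₂ : ∀ k : ℝ, (starRingEnd ℂ) (r₁ (-k)) = r₂ k * (a₂ k / a₁ k))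
    (h₃ : ∀ k : ℝ, 1 + σ * r₁ k * r₂ k = 1 / (a₁ k * a₂ k))
    (J : ℝ → ℝ → ℝ → Matrix (Fin 2) (Fin 2) ℂ)
    (hJ : ∀ x t k : ℝ, J x t k =
      !![1 + σ * r₁ k * r₂ k,
          σ * r₂ k * Complex.exp (-2 * Complex.I * k * x - 4 * Complex.I * k ^ 2 * t);
         r₁ k * Complex.exp (2 * Complex.I * k * x + 4 * Complex.I * k ^ 2 * t), 1]) :
    ∀ x t k : ℝ,
      (!![(0 : ℂ), σ; 1, 0]) * ((J (-x) t (-k)).map (starRingEnd ℂ))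
          * (!![(0 : ℂ), σ; 1, 0])⁻¹
        = !![a₂ k, 0; 0, 1 / a₂ k] * J x t k * !![a₁ k, 0; 0, 1 / a₁ k] := by
  intro x t k
  have hσσ : σ * σ = 1 := by rcases hσ with rfl | rfl <;> norm_num
  have hσ_conj : starRingEnd ℂ σ = σ := by rcases hσ with rfl | rfl <;> simp
  have hr : starRingEnd ℂ (r₁ (-k)) * starRingEnd ℂ (r₂ (-k)) = r₁ k * r₂ k := by
    rw [h₁, h₂]
    field_simp [ha₁ k, ha₂ k]
  rw [antidiag_mul_mul_inv hσσ, diag_mul_mul_diag, hJ, hJ]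
  simp only [map_apply, of_apply, cons_val', cons_val_zero, cons_val_one, empty_val',
    cons_val_fin_one, map_mul, map_add, map_one, hσ_conj, conj_exp_phase_at_neg,
    conj_exp_neg_phase_at_neg]
  refine congrArg of (vec2_eq (vec2_eq ?_ ?_) (vec2_eq ?_ ?_))
  · rw [h₃]
    field_simp [ha₁ k, ha₂ k]
  · rw [h₂]
    ring
  · rw [h₁]
    linear_combination r₁ k * (a₁ k / a₂ k) * exp (2 * I * k * x + 4 * I * k ^ 2 * t) * hσσ
  · rw [mul_assoc σ, hr]
    linear_combination h₃ k
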